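/- Vanishing commutators between reflected and unreflected operators of the same kind: for φ₁, φ₂ ∈ L²(ℝ, ℂ) and ψ ∈ L²(ℝⁿ, ℂ) with Pₙψ = ψ: (a) P_{n+2}(φ₂ ⊗ P_{n+1}(ψ ⊗ conj(φ₁))) = P_{n+2}(P_{n+1}(φ₂ ⊗ ψ) ⊗ conj(φ₁)) (i.e. [z†(φ₁)', z†(φ₂)] = 0); (b) ∫dθ conj(φ₁(θ)) ∫dθ₀ φ₂(θ₀) ψ(θ₀, θ₁,…,θ_{n−2}, θ) may be contracted in either order: the operator z(φ₁)' given by (z(φ₁)'χ)(…) = √k·∫conj(φ₁(θ))χ(…,θ)dθ on ℋ_k commutes with z(φ₂) given by (z(φ₂)χ)(…) = √k·∫φ₂(θ₀)χ(θ₀,…)dθ₀, i.e. z(φ₁)'z(φ₂)ψ = z(φ₂)z(φ₁)'ψ. -/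

import Mathlib

open MeasureTheory Complex

noncomputable section

/-- The `n`-fold L² space over rapidity variables. -/
abbrev Hsp (n : ℕ) : Type := Lp ℂ 2 (volume : Measure (Fin n → ℝ))

/-- The transposition τᵢ = (i, i+1) (0-based) in the symmetric group Sₙ. -/
def tau (n i : ℕ) (h : i + 1 < n) : Equiv.Perm (Fin n) :=
  Equiv.swap ⟨i, Nat.lt_of_succ_lt h⟩ ⟨i + 1, h⟩

/-- `D` is the S₂-twisted representation of Sₙ on L²(ℝⁿ) determined on the
transpositions τᵢ by `(D(τᵢ)ψ)(θ) = S₂(θ_{i+1} − θ_i)·ψ(θ ∘ τᵢ)`. -/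
def IsZamoRep (S₂ : ℝ → ℂ) (n : ℕ)
    (D : Equiv.Perm (Fin n) →* unitary (Hsp n →L[ℂ] Hsp n)) : Prop :=
  ∀ (i : ℕ) (hi : i + 1 < n) (ψ : Hsp n),
    ∀ᵐ θ ∂(volume : Measure (Fin n → ℝ)),
      ((D (tau n i hi) : Hsp n →L[ℂ] Hsp n) ψ) θ
        = S₂ (θ ⟨i + 1, hi⟩ - θ ⟨i, Nat.lt_of_succ_lt hi⟩)
            * ψ (fun m => θ (tau n i hi m))

/-- The symmetrization Pₙ = (1/n!)·Σ_{π ∈ Sₙ} Dₙ(π). -/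
def symProj {n : ℕ}
    (D : Equiv.Perm (Fin n) →* unitary (Hsp n →L[ℂ] Hsp n)) :
    Hsp n →L[ℂ] Hsp n :=
  (n.factorial : ℂ)⁻¹ • ∑ π : Equiv.Perm (Fin n), (D π : Hsp n →L[ℂ] Hsp n)

/-!
Tensoring with a one-particle function on the left, `χ ↦ φ ⊗ χ`, or on the right,
`χ ↦ χ ⊗ φ̄`, intertwines the twisted representation on `k + 1` variables with the one on
`k + 2` variables: `τᵢ` goes to `τᵢ₊₁`, resp. to `τᵢ`, and the factor `S₂` only sees the
two variables being swapped. Since `Pₖ₊₂ D(π) = Pₖ₊₂` for every `π`, an inner symmetrization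
`Pₖ₊₁` is absorbed by the outer `Pₖ₊₂`, and (a) reduces to
`φ₂ ⊗ (ψ ⊗ φ̄₁) = (φ₂ ⊗ ψ) ⊗ φ̄₁`. Part (b) is Fubini: for almost every value of the remaining
variables, the slice `(s, t) ↦ ψ(s, θ, t)` lies in `L²(ℝ²)`, so its product with
`φ₂ ⊗ φ̄₁` is integrable.
-/

open scoped ENNReal

namespace MeasureTheory

section ProductFunctions

variable {α β : Type*} [MeasurableSpace α] [MeasurableSpace β]
  {μ : Measure α} {ν : Measure β} [SFinite ν] {p : ℝ≥0∞}

theorem eLpNorm_mul_prod {f : α → ℂ} {g : β → ℂ} (hp0 : p ≠ 0) (hp : p ≠ ∞)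
    (hf : AEStronglyMeasurable f μ) (hg : AEStronglyMeasurable g ν) :
    eLpNorm (fun z : α × β => f z.1 * g z.2) p (μ.prod ν) = eLpNorm f p μ * eLpNorm g p ν := by
  simp only [eLpNorm_eq_lintegral_rpow_enorm_toReal hp0 hp, enorm_mul,
    ENNReal.mul_rpow_of_nonneg _ _ ENNReal.toReal_nonneg]
  rw [lintegral_prod_mul (hf.aemeasurable.enorm.pow_const _) (hg.aemeasurable.enorm.pow_const _),
    ENNReal.mul_rpow_of_nonneg _ _ (by positivity)]

theorem MemLp.mul_prod {f : α → ℂ} {g : β → ℂ} (hp0 : p ≠ 0) (hp : p ≠ ∞)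
    (hf : MemLp f p μ) (hg : MemLp g p ν) :
    MemLp (fun z : α × β => f z.1 * g z.2) p (μ.prod ν) :=
  ⟨hf.1.comp_fst.mul hg.1.comp_snd, by
    rw [eLpNorm_mul_prod hp0 hp hf.1 hg.1]; exact ENNReal.mul_lt_top hf.2 hg.2⟩

theorem MemLp.prod_right_ae [SFinite μ] {E : Type*} [NormedAddCommGroup E] {F : α × β → E}
    (hp0 : p ≠ 0) (hp : p ≠ ∞) (hF : MemLp F p (μ.prod ν)) :
    ∀ᵐ x ∂μ, MemLp (fun y => F (x, y)) p ν := by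
  filter_upwards [(hF.integrable_norm_rpow hp0 hp).prod_right_ae, hF.1.prodMk_left]
    with x hx hmeas
  refine (memLp_norm_rpow_iff hmeas hp0 hp).mp ?_
  rw [ENNReal.div_self hp0 hp]
  exact memLp_one_iff_integrable.mpr hx

end ProductFunctions

section MulTensor

variable {α β γ : Type*} [MeasurableSpace α] [MeasurableSpace β] [MeasurableSpace γ]
  {μ : Measure α} {ν : Measure β} {ρ : Measure γ} [SFinite ν] {p : ℝ≥0∞}
  {e : γ → α × β} {f : α → ℂ}

theorem eLpNorm_mul_comp_prod (hp0 : p ≠ 0) (hp : p ≠ ∞) (he : MeasurePreserving e ρ (μ.prod ν))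
    (hf : AEStronglyMeasurable f μ) {g : β → ℂ} (hg : AEStronglyMeasurable g ν) :
    eLpNorm (fun x => f (e x).1 * g (e x).2) p ρ = eLpNorm f p μ * eLpNorm g p ν :=
  (eLpNorm_comp_measurePreserving (hf.comp_fst.mul hg.comp_snd) he).trans
    (eLpNorm_mul_prod hp0 hp hf hg)

theorem MemLp.mul_comp_prod (hp0 : p ≠ 0) (hp : p ≠ ∞) (he : MeasurePreserving e ρ (μ.prod ν))
    (hf : MemLp f p μ) {g : β → ℂ} (hg : MemLp g p ν) :
    MemLp (fun x => f (e x).1 * g (e x).2) p ρ :=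
  (hf.mul_prod hp0 hp hg).comp_measurePreserving he

/-- `χ ↦ f ⊗ χ`, read on `ρ` through the identification `e` of `ρ` with `μ × ν`. -/
def mulTensor [Fact (1 ≤ p)] (hp : p ≠ ∞) (he : MeasurePreserving e ρ (μ.prod ν))
    (hf : MemLp f p μ) : Lp ℂ p ν →L[ℂ] Lp ℂ p ρ :=
  have hp0 : p ≠ 0 := (zero_lt_one.trans_le Fact.out).ne'
  have hsnd : Measure.QuasiMeasurePreserving (fun x => (e x).2) ρ ν :=
    Measure.quasiMeasurePreserving_snd.comp he.quasiMeasurePreserving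
  LinearMap.mkContinuous
    { toFun χ := (hf.mul_comp_prod hp0 hp he (Lp.memLp χ)).toLp _
      map_add' χ χ' := by
        rw [← MemLp.toLp_add]
        refine MemLp.toLp_congr _ _ ?_
        filter_upwards [hsnd.ae_eq_comp (Lp.coeFn_add χ χ')] with x hx
        simp only [Function.comp_apply, Pi.add_apply] at hx ⊢
        rw [hx, mul_add]
      map_smul' c χ := by
        rw [RingHom.id_apply, ← MemLp.toLp_const_smul]
        refine MemLp.toLp_congr _ _ ?_
        filter_upwards [hsnd.ae_eq_comp (Lp.coeFn_smul c χ)] with x hx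
        simp only [Function.comp_apply, Pi.smul_apply, smul_eq_mul] at hx ⊢
        rw [hx, mul_left_comm] }
    (eLpNorm f p μ).toReal
    (fun χ => by
      rw [LinearMap.coe_mk, AddHom.coe_mk, Lp.norm_toLp,
        eLpNorm_mul_comp_prod hp0 hp he hf.1 (Lp.memLp χ).1,
        ENNReal.toReal_mul, ← Lp.norm_def])

theorem coeFn_mulTensor [Fact (1 ≤ p)] (hp : p ≠ ∞) (he : MeasurePreserving e ρ (μ.prod ν))
    (hf : MemLp f p μ) (χ : Lp ℂ p ν) :
    mulTensor hp he hf χ =ᵐ[ρ] fun x => f (e x).1 * χ (e x).2 :=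
  MemLp.coeFn_toLp (hf.mul_comp_prod (zero_lt_one.trans_le Fact.out).ne' hp he (Lp.memLp χ))

end MulTensor

section FinTuple

variable {α : Type*} [MeasurableSpace α] (μ : Measure α) [SigmaFinite μ] (k : ℕ)

theorem measurePreserving_zero_tail :
    MeasurePreserving (fun θ : Fin (k + 1) → α => (θ 0, Fin.tail θ))
      (Measure.pi fun _ => μ) (μ.prod (Measure.pi fun _ => μ)) := by
  convert measurePreserving_piFinSuccAbove (fun _ : Fin (k + 1) => μ) 0 using 1
  ext θ <;> simp [Fin.tail]

theorem measurePreserving_last_init :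
    MeasurePreserving (fun θ : Fin (k + 1) → α => (θ (Fin.last k), Fin.init θ))
      (Measure.pi fun _ => μ) (μ.prod (Measure.pi fun _ => μ)) := by
  convert measurePreserving_piFinSuccAbove (fun _ : Fin (k + 1) => μ) (Fin.last k) using 1
  ext θ <;> simp [Fin.init]

theorem quasiMeasurePreserving_tail :
    Measure.QuasiMeasurePreserving (Fin.tail : (Fin (k + 1) → α) → Fin k → α)
      (Measure.pi fun _ => μ) (Measure.pi fun _ => μ) :=
  Measure.quasiMeasurePreserving_snd.comp (measurePreserving_zero_tail μ k).quasiMeasurePreserving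

theorem quasiMeasurePreserving_init :
    Measure.QuasiMeasurePreserving (Fin.init : (Fin (k + 1) → α) → Fin k → α)
      (Measure.pi fun _ => μ) (Measure.pi fun _ => μ) :=
  Measure.quasiMeasurePreserving_snd.comp (measurePreserving_last_init μ k).quasiMeasurePreserving

theorem measurePreserving_cons_snoc :
    MeasurePreserving (fun z : (Fin k → α) × α × α => Fin.cons z.2.1 (Fin.snoc z.1 z.2.2))
      ((Measure.pi fun _ => μ).prod (μ.prod μ)) (Measure.pi fun _ => μ) := by
  have hcons : MeasurePreserving (fun z : α × (Fin (k + 1) → α) => Fin.cons z.1 z.2)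
      (μ.prod (Measure.pi fun _ => μ)) (Measure.pi fun _ => μ) := by
    convert (measurePreserving_piFinSuccAbove (fun _ : Fin (k + 2) => μ) 0).symm using 1
    ext z : 1
    simp [MeasurableEquiv.piFinSuccAbove, Fin.consEquiv]
  have hsnoc : MeasurePreserving (fun z : α × (Fin k → α) => Fin.snoc z.2 z.1)
      (μ.prod (Measure.pi fun _ => μ)) (Measure.pi fun _ => μ) := by
    convert (measurePreserving_piFinSuccAbove (fun _ : Fin (k + 1) => μ) (Fin.last k)).symm
      using 1
    ext z : 1
    simp [MeasurableEquiv.piFinSuccAbove, Fin.snocEquiv]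
  exact hcons.comp (((MeasurePreserving.id μ).prod hsnoc).comp
    ((measurePreserving_prodAssoc μ μ _).comp Measure.measurePreserving_swap))

theorem measurePreserving_comp_perm {ι α : Type*} [Fintype ι] [DecidableEq ι]
    [MeasurableSpace α] (μ : Measure α) [SigmaFinite μ] (σ : Equiv.Perm ι) :
    MeasurePreserving (fun θ : ι → α => fun j => θ (σ j))
      (Measure.pi fun _ => μ) (Measure.pi fun _ => μ) := by
  convert measurePreserving_piCongrLeft (fun _ : ι => μ) σ.symm using 1
  ext θ j
  simpa using (MeasurableEquiv.piCongrLeft_apply_apply (β := fun _ => α) σ.symm θ (σ j)).symm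

end FinTuple

section Fubini

variable {α β : Type*} [MeasurableSpace α] [MeasurableSpace β] {μ : Measure α} {ν : Measure β}
  [SFinite μ] [SFinite ν]

theorem integral_mul_integral_mul_comm {𝕜 : Type*} [RCLike 𝕜] {a : α → 𝕜} {b : β → 𝕜}
    {G : α × β → 𝕜}
    (h : Integrable (fun z => a z.1 * b z.2 * G z) (μ.prod ν)) :
    ∫ y, b y * ∫ x, a x * G (x, y) ∂μ ∂ν = ∫ x, a x * ∫ y, b y * G (x, y) ∂ν ∂μ :=
  calc ∫ y, b y * ∫ x, a x * G (x, y) ∂μ ∂ν = ∫ y, ∫ x, a x * b y * G (x, y) ∂μ ∂ν := by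
        simp only [← integral_const_mul, mul_left_comm (b _), mul_assoc]
    _ = ∫ x, ∫ y, a x * b y * G (x, y) ∂ν ∂μ := (integral_integral_swap h).symm
    _ = ∫ x, a x * ∫ y, b y * G (x, y) ∂ν ∂μ := by
        simp only [← integral_const_mul, mul_assoc]

end Fubini

end MeasureTheory

section Transposition

variable {k i : ℕ}

theorem tau_succ (hi : i + 1 < k + 1) (j : Fin (k + 1)) :
    tau (k + 2) (i + 1) (by omega) j.succ = (tau (k + 1) i hi j).succ :=
  (Fin.succ_injective _).swap_apply ⟨i, by omega⟩ ⟨i + 1, hi⟩ j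

theorem tau_zero (hi : i + 1 < k + 1) : tau (k + 2) (i + 1) (by omega) 0 = 0 :=
  Equiv.swap_apply_of_ne_of_ne (by simp [Fin.ext_iff]) (by simp [Fin.ext_iff])

theorem tau_castSucc (hi : i + 1 < k + 1) (j : Fin (k + 1)) :
    tau (k + 2) i (by omega) j.castSucc = (tau (k + 1) i hi j).castSucc :=
  (Fin.castSucc_injective _).swap_apply ⟨i, by omega⟩ ⟨i + 1, hi⟩ j

theorem tau_last (hi : i + 1 < k + 1) :
    tau (k + 2) i (by omega) (Fin.last (k + 1)) = Fin.last (k + 1) :=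
  Equiv.swap_apply_of_ne_of_ne (by simp [Fin.ext_iff]; omega) (by simp [Fin.ext_iff]; omega)

end Transposition

section Symmetrization

variable {a b : ℕ}

theorem rep_mul_apply (D : Equiv.Perm (Fin a) →* unitary (Hsp a →L[ℂ] Hsp a))
    (π π' : Equiv.Perm (Fin a)) (v : Hsp a) :
    (D (π * π') : Hsp a →L[ℂ] Hsp a) v
      = (D π : Hsp a →L[ℂ] Hsp a) ((D π' : Hsp a →L[ℂ] Hsp a) v) := by
  rw [map_mul]
  rfl

theorem symProj_rep_apply (D : Equiv.Perm (Fin a) →* unitary (Hsp a →L[ℂ] Hsp a))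
    (π : Equiv.Perm (Fin a)) (v : Hsp a) :
    symProj D ((D π : Hsp a →L[ℂ] Hsp a) v) = symProj D v := by
  simp only [symProj, smul_apply, FunLike.coe_sum, Finset.sum_apply]
  rw [← Equiv.sum_comp (Equiv.mulRight π) fun π' => (D π' : Hsp a →L[ℂ] Hsp a) v]
  simp only [Equiv.coe_mulRight, rep_mul_apply]

def Intertwines (Da : Equiv.Perm (Fin a) →* unitary (Hsp a →L[ℂ] Hsp a))
    (Db : Equiv.Perm (Fin b) →* unitary (Hsp b →L[ℂ] Hsp b)) (T : Hsp a →L[ℂ] Hsp b) : Prop :=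
  ∀ σ, ∃ σ', ∀ χ, T ((Da σ : Hsp a →L[ℂ] Hsp a) χ) = (Db σ' : Hsp b →L[ℂ] Hsp b) (T χ)

theorem Intertwines.of_swap_castSucc_succ {m : ℕ}
    {Da : Equiv.Perm (Fin (m + 1)) →* unitary (Hsp (m + 1) →L[ℂ] Hsp (m + 1))}
    {Db : Equiv.Perm (Fin b) →* unitary (Hsp b →L[ℂ] Hsp b)} {T : Hsp (m + 1) →L[ℂ] Hsp b}
    (h : ∀ i : Fin m, ∃ σ', ∀ χ,
      T ((Da (Equiv.swap i.castSucc i.succ) : Hsp (m + 1) →L[ℂ] Hsp (m + 1)) χ)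
        = (Db σ' : Hsp b →L[ℂ] Hsp b) (T χ)) :
    Intertwines Da Db T := by
  intro σ
  induction (Equiv.Perm.mclosure_swap_castSucc_succ m).ge (Set.mem_univ σ)
    using Submonoid.closure_induction with
  | mem _ hx => obtain ⟨i, rfl⟩ := hx; exact h i
  | one => exact ⟨1, fun χ => by simp⟩
  | mul x y _ _ hx hy =>
    obtain ⟨x', hx'⟩ := hx
    obtain ⟨y', hy'⟩ := hy
    exact ⟨x' * y', fun χ => by rw [rep_mul_apply, hx', hy', rep_mul_apply]⟩

theorem Intertwines.symProj_apply_symProj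
    {Da : Equiv.Perm (Fin a) →* unitary (Hsp a →L[ℂ] Hsp a)}
    {Db : Equiv.Perm (Fin b) →* unitary (Hsp b →L[ℂ] Hsp b)} {T : Hsp a →L[ℂ] Hsp b}
    (h : Intertwines Da Db T) (χ : Hsp a) :
    symProj Db (T (symProj Da χ)) = symProj Db (T χ) := by
  have hσ (σ : Equiv.Perm (Fin a)) :
      symProj Db (T ((Da σ : Hsp a →L[ℂ] Hsp a) χ)) = symProj Db (T χ) := by
    obtain ⟨σ', hσ'⟩ := h σ
    rw [hσ', symProj_rep_apply]
  have hP : symProj Da χ = (a.factorial : ℂ)⁻¹ • ∑ σ, (Da σ : Hsp a →L[ℂ] Hsp a) χ := by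
    rw [symProj, smul_apply, FunLike.coe_sum, Finset.sum_apply]
  simp only [hP, map_smul, map_sum, hσ, Finset.sum_const, Finset.card_univ, Fintype.card_perm,
    Fintype.card_fin, ← Nat.cast_smul_eq_nsmul ℂ, smul_smul]
  rw [inv_mul_cancel₀ (by exact_mod_cast a.factorial_ne_zero), one_smul]

end Symmetrization

section Tensor

variable {S₂ : ℝ → ℂ} {D : ∀ k : ℕ, Equiv.Perm (Fin k) →* unitary (Hsp k →L[ℂ] Hsp k)}
  {f g : ℝ → ℂ} {k : ℕ}

/-- `χ ↦ f ⊗ χ`. -/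
def tensorLeft (hf : MemLp f 2 volume) (k : ℕ) : Hsp k →L[ℂ] Hsp (k + 1) :=
  mulTensor ENNReal.ofNat_ne_top (measurePreserving_zero_tail volume k) hf

/-- `χ ↦ χ ⊗ f`. -/
def tensorRight (hf : MemLp f 2 volume) (k : ℕ) : Hsp k →L[ℂ] Hsp (k + 1) :=
  mulTensor ENNReal.ofNat_ne_top (measurePreserving_last_init volume k) hf

theorem coeFn_tensorLeft (hf : MemLp f 2 volume) (χ : Hsp k) :
    tensorLeft hf k χ =ᵐ[volume] fun θ => f (θ 0) * χ (Fin.tail θ) :=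
  coeFn_mulTensor _ _ hf χ

theorem coeFn_tensorRight (hf : MemLp f 2 volume) (χ : Hsp k) :
    tensorRight hf k χ =ᵐ[volume] fun θ => χ (Fin.init θ) * f (θ (Fin.last k)) :=
  (coeFn_mulTensor _ _ hf χ).mono fun _ h => h.trans (mul_comm _ _)

theorem toLp_eq_tensorLeft (hf : MemLp f 2 volume) (χ : Hsp k)
    (h : MemLp (fun θ : Fin (k + 1) → ℝ => f (θ 0) * χ (Fin.tail θ)) 2 volume) :
    h.toLp _ = tensorLeft hf k χ :=
  Lp.ext (h.coeFn_toLp.trans (coeFn_tensorLeft hf χ).symm)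

theorem toLp_eq_tensorRight (hf : MemLp f 2 volume) (χ : Hsp k)
    (h : MemLp (fun θ : Fin (k + 1) → ℝ => χ (Fin.init θ) * f (θ (Fin.last k))) 2 volume) :
    h.toLp _ = tensorRight hf k χ :=
  Lp.ext (h.coeFn_toLp.trans (coeFn_tensorRight hf χ).symm)

theorem tensorLeft_tensorRight (hf : MemLp f 2 volume) (hg : MemLp g 2 volume) (χ : Hsp k) :
    tensorLeft hf (k + 1) (tensorRight hg k χ) = tensorRight hg (k + 1) (tensorLeft hf k χ) := by
  apply Lp.ext
  filter_upwards [coeFn_tensorLeft hf (tensorRight hg k χ),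
    (quasiMeasurePreserving_tail volume (k + 1)).ae_eq_comp (coeFn_tensorRight hg χ),
    coeFn_tensorRight hg (tensorLeft hf k χ),
    (quasiMeasurePreserving_init volume (k + 1)).ae_eq_comp (coeFn_tensorLeft hf χ)]
    with θ h₁ h₂ h₃ h₄
  simp only [Function.comp_apply] at h₂ h₄
  rw [h₁, h₂, h₃, h₄, Fin.tail_init_eq_init_tail]
  simp only [Fin.tail, Fin.init, Fin.succ_last, Fin.castSucc_zero]
  ring

theorem tensorLeft_rep_tau (hD : ∀ k, IsZamoRep S₂ k (D k)) (hf : MemLp f 2 volume) {i : ℕ}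
    (hi : i + 1 < k + 1) (χ : Hsp (k + 1)) :
    tensorLeft hf (k + 1) ((D (k + 1) (tau (k + 1) i hi) : Hsp (k + 1) →L[ℂ] Hsp (k + 1)) χ)
      = (D (k + 2) (tau (k + 2) (i + 1) (by omega)) : Hsp (k + 2) →L[ℂ] Hsp (k + 2))
          (tensorLeft hf (k + 1) χ) := by
  apply Lp.ext
  filter_upwards [coeFn_tensorLeft hf _,
    (quasiMeasurePreserving_tail volume (k + 1)).ae_eq_comp (hD (k + 1) i hi χ),
    hD (k + 2) (i + 1) (by omega) (tensorLeft hf (k + 1) χ),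
    (measurePreserving_comp_perm volume
      (tau (k + 2) (i + 1) (by omega))).quasiMeasurePreserving.ae_eq_comp (coeFn_tensorLeft hf χ)]
    with θ h₁ h₂ h₃ h₄
  simp only [Function.comp_apply] at h₂ h₄
  have htail : Fin.tail (fun j => θ (tau (k + 2) (i + 1) (by omega) j))
      = fun j => Fin.tail θ (tau (k + 1) i hi j) :=
    funext fun j => congrArg θ (tau_succ hi j)
  rw [h₁, h₂, h₃, h₄, tau_zero hi, htail]
  exact mul_left_comm _ _ _

theorem tensorRight_rep_tau (hD : ∀ k, IsZamoRep S₂ k (D k)) (hf : MemLp f 2 volume) {i : ℕ}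
    (hi : i + 1 < k + 1) (χ : Hsp (k + 1)) :
    tensorRight hf (k + 1) ((D (k + 1) (tau (k + 1) i hi) : Hsp (k + 1) →L[ℂ] Hsp (k + 1)) χ)
      = (D (k + 2) (tau (k + 2) i (by omega)) : Hsp (k + 2) →L[ℂ] Hsp (k + 2))
          (tensorRight hf (k + 1) χ) := by
  apply Lp.ext
  filter_upwards [coeFn_tensorRight hf _,
    (quasiMeasurePreserving_init volume (k + 1)).ae_eq_comp (hD (k + 1) i hi χ),
    hD (k + 2) i (by omega) (tensorRight hf (k + 1) χ),
    (measurePreserving_comp_perm volume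
      (tau (k + 2) i (by omega))).quasiMeasurePreserving.ae_eq_comp (coeFn_tensorRight hf χ)]
    with θ h₁ h₂ h₃ h₄
  simp only [Function.comp_apply] at h₂ h₄
  have hinit : Fin.init (fun j => θ (tau (k + 2) i (by omega) j))
      = fun j => Fin.init θ (tau (k + 1) i hi j) :=
    funext fun j => congrArg θ (tau_castSucc hi j)
  rw [h₁, h₂, h₃, h₄, tau_last hi, hinit]
  exact mul_assoc _ _ _

theorem intertwines_tensorLeft (hD : ∀ k, IsZamoRep S₂ k (D k)) (hf : MemLp f 2 volume) :
    Intertwines (D (k + 1)) (D (k + 2)) (tensorLeft hf (k + 1)) :=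
  .of_swap_castSucc_succ fun i => ⟨_, tensorLeft_rep_tau hD hf (i := i) (by omega)⟩

theorem intertwines_tensorRight (hD : ∀ k, IsZamoRep S₂ k (D k)) (hf : MemLp f 2 volume) :
    Intertwines (D (k + 1)) (D (k + 2)) (tensorRight hf (k + 1)) :=
  .of_swap_castSucc_succ fun i => ⟨_, tensorRight_rep_tau hD hf (i := i) (by omega)⟩

end Tensor

theorem statement15 (S₂ : ℝ → ℂ)
    (n : ℕ)
    (D : ∀ k : ℕ, Equiv.Perm (Fin k) →* unitary (Hsp k →L[ℂ] Hsp k))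
    (hD : ∀ k : ℕ, IsZamoRep S₂ k (D k))
    (φ₁ φ₂ : Lp ℂ 2 (volume : Measure ℝ)) :
    -- (a) creation operators: [z†(φ₁)', z†(φ₂)] = 0
    (∀ ψ : Hsp n, symProj (D n) ψ = ψ →
      ∃ (h1 : MemLp (fun θ : Fin (n + 1) → ℝ =>
            ψ (Fin.init θ) * starRingEnd ℂ (φ₁ (θ (Fin.last n)))) 2
          (volume : Measure (Fin (n + 1) → ℝ)))
        (h2 : MemLp (fun θ : Fin (n + 2) → ℝ =>
            φ₂ (θ 0) * (symProj (D (n + 1)) (h1.toLp _)) (Fin.tail θ)) 2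
          (volume : Measure (Fin (n + 2) → ℝ)))
        (h3 : MemLp (fun θ : Fin (n + 1) → ℝ => φ₂ (θ 0) * ψ (Fin.tail θ)) 2
          (volume : Measure (Fin (n + 1) → ℝ)))
        (h4 : MemLp (fun θ : Fin (n + 2) → ℝ =>
            (symProj (D (n + 1)) (h3.toLp _)) (Fin.init θ) *
              starRingEnd ℂ (φ₁ (θ (Fin.last (n + 1))))) 2
          (volume : Measure (Fin (n + 2) → ℝ))),
        symProj (D (n + 2)) (h2.toLp _) = symProj (D (n + 2)) (h4.toLp _)) ∧
    -- (b) annihilation operators: z(φ₁)'z(φ₂)ψ = z(φ₂)z(φ₁)'ψ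
    (∀ ψ : Hsp (n + 2), symProj (D (n + 2)) ψ = ψ →
      ∀ᵐ θ ∂(volume : Measure (Fin n → ℝ)),
        (Real.sqrt (n + 1) : ℂ) * (Real.sqrt (n + 2) : ℂ) *
            ∫ t : ℝ, starRingEnd ℂ (φ₁ t) *
              ∫ s : ℝ, φ₂ s * ψ (Fin.cons s (Fin.snoc θ t))
          = (Real.sqrt (n + 1) : ℂ) * (Real.sqrt (n + 2) : ℂ) *
              ∫ s : ℝ, φ₂ s *
                ∫ t : ℝ, starRingEnd ℂ (φ₁ t) * ψ (Fin.snoc (Fin.cons s θ) t)) := by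
  have hφ₁ : MemLp (fun t => starRingEnd ℂ (φ₁ t)) 2 volume := (Lp.memLp φ₁).star
  have hφ₂ := Lp.memLp φ₂
  refine ⟨fun ψ _ => ?_, fun ψ _ => ?_⟩
  · refine ⟨(Lp.memLp (tensorRight hφ₁ n ψ)).ae_eq (coeFn_tensorRight hφ₁ ψ),
      (Lp.memLp (tensorLeft hφ₂ (n + 1) _)).ae_eq (coeFn_tensorLeft hφ₂ _),
      (Lp.memLp (tensorLeft hφ₂ n ψ)).ae_eq (coeFn_tensorLeft hφ₂ ψ),
      (Lp.memLp (tensorRight hφ₁ (n + 1) _)).ae_eq (coeFn_tensorRight hφ₁ _), ?_⟩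
    simp only [toLp_eq_tensorLeft hφ₂, toLp_eq_tensorRight hφ₁]
    rw [(intertwines_tensorLeft hD hφ₂).symProj_apply_symProj,
      (intertwines_tensorRight hD hφ₁).symProj_apply_symProj, tensorLeft_tensorRight]
  · have hF := (Lp.memLp ψ).comp_measurePreserving (measurePreserving_cons_snoc volume n)
    filter_upwards [hF.prod_right_ae two_ne_zero ENNReal.ofNat_ne_top] with θ hθ
    have hfubini := integral_mul_integral_mul_comm (a := φ₂) (b := fun t => starRingEnd ℂ (φ₁ t))
      (G := fun z => ψ (Fin.cons z.1 (Fin.snoc θ z.2)))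
      (((hφ₂.mul_prod two_ne_zero ENNReal.ofNat_ne_top hφ₁).integrable_mul hθ).congr
        (ae_of_all _ fun _ => rfl))
    simp only [← Fin.cons_snoc_eq_snoc_cons]
    rw [hfubini]
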